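/- Fix an integer n ≥ 1 and reals α ≥ 1, β ≥ n, and let S_{α,β} = ∂T_{α,β} ⊂ ℝ^{n+1} be as in the construction below. Let N_k(S_{α,β}) denote the smallest number of sets of diameter at most 2^{−k} needed to cover S_{α,β}. Then the upper Minkowski dimension of S_{α,β} equals (n+1)β/(β+1); that is, limsup_{k→∞} log N_k(S_{α,β}) / (k·log 2) = (n+1)β/(β+1). -/

import Mathlib

open MeasureTheory Set

/-- The spacing `a_m = 2^{-m-⌊mβ⌋}` of the construction. -/
noncomputable def fractalSpacing (β : ℝ) (m : ℕ) : ℝ :=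
  (2 : ℝ) ^ (-(m : ℝ) - (⌊(m : ℝ) * β⌋ : ℝ))

/-- The right endpoints `y_{mj} = 2^{-m} + j·a_m`. -/
noncomputable def fractalPoint (β : ℝ) (m j : ℕ) : ℝ :=
  (2 : ℝ) ^ (-(m : ℝ)) + (j : ℝ) * fractalSpacing β m

/-- The rectangles `R_{mj} = [y_{mj} - C_m, y_{mj}] × [0, 2^{-m}]^n` with
`C_m = a_m^α / 2`. -/
noncomputable def fractalRect (n : ℕ) (α β : ℝ) (m j : ℕ) :
    Set (EuclideanSpace ℝ (Fin (n + 1))) :=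
  {x | x 0 ∈ Icc (fractalPoint β m j - (fractalSpacing β m) ^ α / 2) (fractalPoint β m j) ∧
       ∀ i : Fin (n + 1), i ≠ 0 → x i ∈ Icc (0 : ℝ) ((2 : ℝ) ^ (-(m : ℝ)))}

/-- The base cube `Q = [0,1]^n × [-1,0]` (last coordinate in `[-1,0]`). -/
def fractalBase (n : ℕ) : Set (EuclideanSpace ℝ (Fin (n + 1))) :=
  {x | (∀ i : Fin (n + 1), (i : ℕ) < n → x i ∈ Icc (0 : ℝ) 1) ∧
       x (Fin.last n) ∈ Icc (-1 : ℝ) 0}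

/-- The fractal domain `T_{α,β} = Q ∪ ⋃_{m≥1} ⋃_{j=1}^{2^{⌊mβ⌋}} R_{mj}`. -/
noncomputable def fractalDomain (n : ℕ) (α β : ℝ) :
    Set (EuclideanSpace ℝ (Fin (n + 1))) :=
  fractalBase n ∪
    ⋃ (m : ℕ) (_ : 1 ≤ m) (j : ℕ) (_ : 1 ≤ j) (_ : j ≤ 2 ^ (⌊(m : ℝ) * β⌋.toNat)),
      fractalRect n α β m j

/-- `N_k(E)`: the smallest number of sets of diameter at most `2^{-k}`
needed to cover `E` (by a finite family). -/
noncomputable def dyadicCoveringNumber {n : ℕ}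
    (E : Set (EuclideanSpace ℝ (Fin (n + 1)))) (k : ℕ) : ℕ :=
  sInf {N : ℕ | ∃ F : Finset (Set (EuclideanSpace ℝ (Fin (n + 1)))),
    F.card = N ∧ E ⊆ ⋃₀ (F : Set (Set (EuclideanSpace ℝ (Fin (n + 1))))) ∧
    ∀ U ∈ F, EMetric.diam U ≤ ENNReal.ofReal ((2 : ℝ) ^ (-(k : ℝ)))}

/-!
Upper bound: at scale `2^{-k}` put `M = ⌈k/(β+1)⌉`. The frontier of the base and of the
rectangles of level `m ≤ M` is covered face by face by dyadic grid cubes, and all rectangles of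
level `> M` lie in one cube of side `2^{-M}`. Since `β ≥ n`, the level-`M` faces dominate, and each
of the `O(k)` pieces needs at most `2^{kD + O(1)}` cubes, where `D = (n+1)β/(β+1)`.

Lower bound: take `m ≈ k/(β+1)`. Each rectangle of level `m` is followed by a gap of width
`a_m/2`, so its right face `x₀ = y_{mj}` lies in the frontier. On these `2^{⌊mβ⌋}` faces the points
with the other coordinates on the grid of mesh `2^{1-k}` are `2^{-k}`-separated, and there are
`2^{kD - O(1)}` of them.
-/

open Filter Topology
open scoped ENNReal

section Coverable

variable {X : Type*} [PseudoEMetricSpace X]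

def CoverableBy (E : Set X) (δ : ℝ≥0∞) (N : ℝ) : Prop :=
  ∃ F : Finset (Set X), (F.card : ℝ) ≤ N ∧ E ⊆ ⋃₀ (F : Set (Set X)) ∧ ∀ U ∈ F, Metric.ediam U ≤ δ

namespace CoverableBy

variable {E E' : Set X} {δ δ' : ℝ≥0∞} {N N' : ℝ}

lemma mono (h : CoverableBy E δ N) (hE : E' ⊆ E) (hδ : δ ≤ δ') (hN : N ≤ N') :
    CoverableBy E' δ' N' :=
  let ⟨F, hF, hEF, hdiam⟩ := h
  ⟨F, hF.trans hN, hE.trans hEF, fun U hU => (hdiam U hU).trans hδ⟩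

lemma empty : CoverableBy (∅ : Set X) δ 0 :=
  ⟨∅, by simp, empty_subset _, by simp⟩

lemma union (h : CoverableBy E δ N) (h' : CoverableBy E' δ N') :
    CoverableBy (E ∪ E') δ (N + N') := by
  classical
  obtain ⟨F, hF, hEF, hdiam⟩ := h
  obtain ⟨F', hF', hEF', hdiam'⟩ := h'
  refine ⟨F ∪ F', ?_, ?_, ?_⟩
  · exact (Nat.cast_le.mpr (Finset.card_union_le F F')).trans (by push_cast; linarith)
  · rw [Finset.coe_union, sUnion_union]
    exact union_subset_union hEF hEF'
  · simpa only [Finset.mem_union] using fun U hU => hU.elim (hdiam U) (hdiam' U)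

lemma biUnion {ι : Type*} (s : Finset ι) {E : ι → Set X} {N : ι → ℝ}
    (h : ∀ i ∈ s, CoverableBy (E i) δ (N i)) :
    CoverableBy (⋃ i ∈ s, E i) δ (∑ i ∈ s, N i) := by
  classical
  induction s using Finset.induction_on with
  | empty => simpa using empty
  | insert i s hi ih =>
    rw [Finset.set_biUnion_insert, Finset.sum_insert hi]
    exact (h i (Finset.mem_insert_self i s)).union
      (ih fun j hj => h j (Finset.mem_insert_of_mem hj))

end CoverableBy

end Coverable

section DyadicCoveringNumber

variable {n : ℕ} {S : Set (EuclideanSpace ℝ (Fin (n + 1)))} {k : ℕ} {N : ℝ}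

lemma dyadicCoveringNumber_le (h : CoverableBy S (ENNReal.ofReal ((2 : ℝ) ^ (-(k : ℝ)))) N) :
    (dyadicCoveringNumber S k : ℝ) ≤ N := by
  obtain ⟨F, hF, hSF, hdiam⟩ := h
  exact le_trans (Nat.cast_le.mpr (Nat.sInf_le ⟨F, rfl, hSF, hdiam⟩)) hF

/-- Each member of an optimal cover contains at most one point of a `2^{-k}`-separated family.
`hS` is there because `sInf ∅ = 0`: it makes the infimum attained. -/
lemma card_le_dyadicCoveringNumber
    (hS : CoverableBy S (ENNReal.ofReal ((2 : ℝ) ^ (-(k : ℝ)))) N)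
    {ι : Type*} [Fintype ι] (p : ι → EuclideanSpace ℝ (Fin (n + 1))) (hpS : ∀ i, p i ∈ S)
    (hsep : Pairwise fun i j => (2 : ℝ) ^ (-(k : ℝ)) < dist (p i) (p j)) :
    Fintype.card ι ≤ dyadicCoveringNumber S k := by
  obtain ⟨F₀, -, hSF₀, hdiam₀⟩ := hS
  have hcovers : {N : ℕ | ∃ F : Finset (Set (EuclideanSpace ℝ (Fin (n + 1)))),
      F.card = N ∧ S ⊆ ⋃₀ (F : Set (Set (EuclideanSpace ℝ (Fin (n + 1))))) ∧
      ∀ U ∈ F, Metric.ediam U ≤ ENNReal.ofReal ((2 : ℝ) ^ (-(k : ℝ)))}.Nonempty :=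
    ⟨_, F₀, rfl, hSF₀, hdiam₀⟩
  obtain ⟨F, hF, hSF, hdiam⟩ := Nat.sInf_mem hcovers
  choose U hUF hpU using fun i => mem_sUnion.mp (hSF (hpS i))
  calc Fintype.card ι = Finset.univ.card := Finset.card_univ.symm
    _ ≤ F.card := Finset.card_le_card_of_injOn U (fun i _ => hUF i) fun i _ j _ hij => ?_
    _ = dyadicCoveringNumber S k := hF
  by_contra hne
  have hle : edist (p i) (p j) ≤ ENNReal.ofReal ((2 : ℝ) ^ (-(k : ℝ))) :=
    (Metric.edist_le_ediam_of_mem (hpU i) (hij ▸ hpU j)).trans (hdiam _ (hUF i))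
  rw [edist_dist, ENNReal.ofReal_le_ofReal_iff (by positivity)] at hle
  exact (hsep hne).not_ge hle

end DyadicCoveringNumber

section Box

variable {ι : Type*}

def box (a b : ι → ℝ) : Set (EuclideanSpace ℝ ι) := WithLp.ofLp ⁻¹' Icc a b

variable {a b : ι → ℝ}

@[simp]
lemma mem_box {x : EuclideanSpace ℝ ι} : x ∈ box a b ↔ ∀ i, x i ∈ Icc (a i) (b i) := by
  simp only [box, mem_preimage, ← pi_univ_Icc, mem_univ_pi]

lemma isClosed_box : IsClosed (box a b) :=
  isClosed_Icc.preimage (PiLp.continuous_ofLp 2 _)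

/-- `box a (update b i (a i))` is the face `x i = a i`, and `box (update a i (b i)) b` the face
`x i = b i`. -/
lemma frontier_box_subset [Fintype ι] [DecidableEq ι] :
    frontier (box a b) ⊆
      ⋃ i, (box a (Function.update b i (a i)) ∪ box (Function.update a i (b i)) b) := by
  intro x hx
  have hxbox : ∀ i, x i ∈ Icc (a i) (b i) := mem_box.mp (isClosed_box.frontier_subset hx)
  set U : Set (EuclideanSpace ℝ ι) := WithLp.ofLp ⁻¹' pi univ fun i => Ioo (a i) (b i)
  have hU : U ⊆ interior (box a b) :=
    interior_maximal (fun y hy => mem_box.mpr fun i => Ioo_subset_Icc_self (hy i (mem_univ i)))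
      ((isOpen_set_pi finite_univ fun i _ => isOpen_Ioo).preimage (PiLp.continuous_ofLp 2 _))
  obtain ⟨i, hi⟩ : ∃ i, x i ∉ Ioo (a i) (b i) := by
    simpa [U, mem_univ_pi] using fun h => hx.2 (hU h)
  have hxi : x i = a i ∨ x i = b i := by
    rw [mem_Ioo, not_and_or, not_lt, not_lt] at hi
    exact hi.imp (fun h => le_antisymm h (hxbox i).1) fun h => le_antisymm (hxbox i).2 h
  refine mem_iUnion.mpr ⟨i, hxi.imp (fun h => mem_box.mpr fun j => ?_)
    fun h => mem_box.mpr fun j => ?_⟩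
  all_goals rcases eq_or_ne j i with rfl | hj
  all_goals simp_all

def gridCube (s : ℝ) (σ : ι → ℤ) : Set (EuclideanSpace ℝ ι) :=
  box (fun i => σ i * s) (fun i => (σ i + 1) * s)

variable [Fintype ι]

lemma ediam_gridCube_le {s : ℝ} (hs : 0 ≤ s) (σ : ι → ℤ) :
    Metric.ediam (gridCube s σ) ≤ ENNReal.ofReal (√(Fintype.card ι) * s) := by
  refine Metric.ediam_le fun x hx y hy => ?_
  rw [edist_dist]
  refine ENNReal.ofReal_le_ofReal ?_
  rw [gridCube, mem_box] at hx hy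
  have hcoord : ∀ i, dist (x i) (y i) ^ 2 ≤ s ^ 2 := fun i => by
    obtain ⟨⟨hx₁, hx₂⟩, ⟨hy₁, hy₂⟩⟩ := And.intro (hx i) (hy i)
    refine pow_le_pow_left₀ dist_nonneg ?_ 2
    rw [Real.dist_eq, abs_sub_le_iff]
    constructor <;> linarith [add_one_mul (σ i : ℝ) s]
  calc dist x y = √(∑ i, dist (x i) (y i) ^ 2) := EuclideanSpace.dist_eq x y
    _ ≤ √(Fintype.card ι * s ^ 2) := by
      gcongr
      simpa using Finset.sum_le_sum fun i (_ : i ∈ Finset.univ) => hcoord i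
    _ = √(Fintype.card ι) * s := by rw [Real.sqrt_mul (Nat.cast_nonneg _), Real.sqrt_sq hs]

lemma card_Icc_floor_div_le {s u v : ℝ} (hs : 0 < s) (huv : u ≤ v) :
    ((Finset.Icc ⌊u / s⌋ ⌊v / s⌋).card : ℝ) ≤ (v - u) / s + 2 := by
  have hle : ⌊u / s⌋ ≤ ⌊v / s⌋ := Int.floor_mono (div_le_div_of_nonneg_right huv hs.le)
  rw [Int.card_Icc, ← Int.cast_natCast, Int.toNat_of_nonneg (by omega)]
  push_cast
  have := Int.floor_le (v / s)
  have := Int.sub_one_lt_floor (u / s)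
  rw [sub_div]
  linarith

lemma box_coverableBy {s : ℝ} (hs : 0 < s) (hab : a ≤ b) :
    CoverableBy (box a b) (ENNReal.ofReal (√(Fintype.card ι) * s))
      (∏ i, ((b i - a i) / s + 2)) := by
  classical
  refine ⟨(Fintype.piFinset fun i => Finset.Icc ⌊a i / s⌋ ⌊b i / s⌋).image (gridCube s),
    ?_, fun x hx => ?_, ?_⟩
  · calc ((Finset.image (gridCube s) _).card : ℝ)
        ≤ ((Fintype.piFinset fun i => Finset.Icc ⌊a i / s⌋ ⌊b i / s⌋).card : ℝ) :=
          Nat.cast_le.mpr Finset.card_image_le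
      _ ≤ ∏ i, ((b i - a i) / s + 2) := by
        rw [Fintype.card_piFinset, Nat.cast_prod]
        exact Finset.prod_le_prod (fun i _ => Nat.cast_nonneg _)
          fun i _ => card_Icc_floor_div_le hs (hab i)
  · rw [mem_box] at hx
    refine mem_sUnion.mpr ⟨gridCube s fun i => ⌊x i / s⌋, ?_, mem_box.mpr fun i => ⟨?_, ?_⟩⟩
    · refine Finset.mem_coe.mpr (Finset.mem_image_of_mem _ (Fintype.mem_piFinset.mpr fun i => ?_))
      exact Finset.mem_Icc.mpr ⟨Int.floor_mono (by gcongr; exact (hx i).1),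
        Int.floor_mono (by gcongr; exact (hx i).2)⟩
    · exact (le_div_iff₀ hs).mp (Int.floor_le _)
    · exact (div_le_iff₀ hs).mp (Int.lt_floor_add_one _).le
  · simp only [Finset.mem_image]
    rintro U ⟨σ, -, rfl⟩
    exact ediam_gridCube_le hs.le σ

lemma prod_le_mul_pow_card_sub_one {f : ι → ℝ} {P : ℝ} (i : ι) (hf : ∀ j, 0 ≤ f j)
    (hP : ∀ j ≠ i, f j ≤ P) : ∏ j, f j ≤ f i * P ^ (Fintype.card ι - 1) := by
  classical
  rw [← Finset.mul_prod_erase _ _ (Finset.mem_univ i)]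
  refine mul_le_mul_of_nonneg_left ?_ (hf i)
  calc ∏ j ∈ Finset.univ.erase i, f j ≤ ∏ _j ∈ Finset.univ.erase i, P :=
        Finset.prod_le_prod (fun j _ => hf j) fun j hj => hP j (Finset.ne_of_mem_erase hj)
    _ = P ^ (Fintype.card ι - 1) := by
      rw [Finset.prod_const, Finset.card_erase_of_mem (Finset.mem_univ i), Finset.card_univ]

lemma face_coverableBy {s P : ℝ} (hs : 0 < s) (hP : ∀ i, (b i - a i) / s + 2 ≤ P)
    {a' b' : ι → ℝ} (hab' : a' ≤ b') (i : ι) (hi : a' i = b' i)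
    (hj : ∀ j ≠ i, b' j - a' j = b j - a j) :
    CoverableBy (box a' b') (ENNReal.ofReal (√(Fintype.card ι) * s))
      (2 * P ^ (Fintype.card ι - 1)) := by
  refine (box_coverableBy hs hab').mono subset_rfl le_rfl ?_
  calc ∏ j, ((b' j - a' j) / s + 2)
      ≤ ((b' i - a' i) / s + 2) * P ^ (Fintype.card ι - 1) :=
        prod_le_mul_pow_card_sub_one i
          (fun j => by have := div_nonneg (sub_nonneg.mpr (hab' j)) hs.le; linarith)
          fun j hji => hj j hji ▸ hP j
    _ = 2 * P ^ (Fintype.card ι - 1) := by simp [hi]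

lemma frontier_box_coverableBy [DecidableEq ι] {s P : ℝ} (hs : 0 < s) (hab : a ≤ b)
    (hP : ∀ i, (b i - a i) / s + 2 ≤ P) :
    CoverableBy (frontier (box a b)) (ENNReal.ofReal (√(Fintype.card ι) * s))
      (Fintype.card ι * (4 * P ^ (Fintype.card ι - 1))) := by
  have hfaces := CoverableBy.biUnion Finset.univ fun i (_ : i ∈ Finset.univ) =>
    (face_coverableBy hs hP (a' := a) (b' := Function.update b i (a i))
        (fun j => by rcases eq_or_ne j i with rfl | hj <;> simp [*, hab j]) i (by simp)
        fun j hj => by simp [hj]).union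
      (face_coverableBy hs hP (a' := Function.update a i (b i)) (b' := b)
        (fun j => by rcases eq_or_ne j i with rfl | hj <;> simp [*, hab j]) i (by simp)
        fun j hj => by simp [hj])
  refine hfaces.mono (frontier_box_subset.trans (by simp)) le_rfl (le_of_eq ?_)
  simp only [Finset.sum_const, Finset.card_univ, nsmul_eq_mul]
  ring

end Box

lemma mem_frontier_of_mem_of_subset {X : Type*} [TopologicalSpace X] {s t : Set X} {x : X}
    (hx : x ∈ frontier s) (hxt : x ∈ t) (hts : t ⊆ s) : x ∈ frontier t :=
  ⟨subset_closure hxt, fun h => hx.2 (interior_mono hts h)⟩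

lemma le_dist_natCast_mul {a b : ℕ} (h : a ≠ b) {s : ℝ} (hs : 0 ≤ s) :
    s ≤ dist (a * s) (b * s) := by
  rw [Real.dist_eq, ← sub_mul, abs_mul, abs_of_nonneg hs]
  refine le_mul_of_one_le_left hs ?_
  have hab : (a : ℤ) ≠ b := by exact_mod_cast h
  have : (1 : ℤ) ≤ |(a : ℤ) - b| := Int.one_le_abs (sub_ne_zero.mpr hab)
  exact_mod_cast this

lemma two_mul_two_rpow_neg_le {m m' : ℕ} (h : m' < m) :
    2 * (2 : ℝ) ^ (-(m : ℝ)) ≤ 2 ^ (-(m' : ℝ)) := by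
  have : (m' : ℝ) + 1 ≤ m := by exact_mod_cast h
  calc 2 * (2 : ℝ) ^ (-(m : ℝ)) = 2 ^ (-(m : ℝ) + 1) := by
        rw [Real.rpow_add_one two_ne_zero]; ring
    _ ≤ 2 ^ (-(m' : ℝ)) := Real.rpow_le_rpow_of_exponent_le one_le_two (by linarith)

lemma div_two_rpow_neg_add_two_le {t m K : ℝ} (ht : t ≤ 2 ^ (-m)) (hmK : m + 1 ≤ K) :
    t / 2 ^ (-K) + 2 ≤ 2 ^ (K - m + 1) := by
  have h₁ : t / 2 ^ (-K) ≤ 2 ^ (K - m) := by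
    rw [div_le_iff₀ (Real.rpow_pos_of_pos two_pos _), ← Real.rpow_add two_pos]
    rwa [show K - m + -K = -m by ring]
  have h₂ : (2 : ℝ) ≤ 2 ^ (K - m) := by
    simpa using Real.rpow_le_rpow_of_exponent_le one_le_two (show 1 ≤ K - m by linarith)
  rw [Real.rpow_add_one two_ne_zero]
  linarith

lemma sqrt_mul_two_rpow_neg_le (n k : ℕ) :
    √(n + 1) * (2 : ℝ) ^ (-((k : ℝ) + n + 1)) ≤ 2 ^ (-(k : ℝ)) := by
  have hpow : (1 : ℝ) ≤ 2 ^ (n + 1) := one_le_pow₀ one_le_two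
  have hsqrt : √(n + 1) ≤ (2 : ℝ) ^ (n + 1) := by
    refine Real.sqrt_le_iff.mpr ⟨by positivity, ?_⟩
    have : ((n + 1 : ℕ) : ℝ) < 2 ^ (n + 1) := by exact_mod_cast Nat.lt_two_pow_self
    push_cast at this
    nlinarith
  have hsplit : (2 : ℝ) ^ (-((k : ℝ) + n + 1)) * 2 ^ (n + 1) = 2 ^ (-(k : ℝ)) := by
    rw [← Real.rpow_natCast, ← Real.rpow_add two_pos]
    push_cast
    ring_nf
  calc √(n + 1) * (2 : ℝ) ^ (-((k : ℝ) + n + 1))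
      ≤ 2 ^ (n + 1) * (2 : ℝ) ^ (-((k : ℝ) + n + 1)) := by gcongr
    _ = 2 ^ (-(k : ℝ)) := by rw [mul_comm, hsplit]

lemma tendsto_log_div_of_two_rpow_bounds {u : ℕ → ℝ} {D c C : ℝ}
    (hlow : ∀ᶠ k : ℕ in atTop, (2 : ℝ) ^ (k * D - c) ≤ u k)
    (hup : ∀ᶠ k : ℕ in atTop, u k ≤ C * (k + 2) * 2 ^ (k * D)) :
    Tendsto (fun k : ℕ => Real.log (u k) / (k * Real.log 2)) atTop (𝓝 D) := by
  have hlog2 : 0 < Real.log 2 := Real.log_pos one_lt_two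
  have hlim_low : Tendsto (fun k : ℕ => D - c / k) atTop (𝓝 D) := by
    simpa using tendsto_const_nhds.sub (tendsto_const_div_atTop_nhds_zero_nat c)
  have hlim_up : Tendsto (fun k : ℕ => D + Real.log C / Real.log 2 / k +
      Real.log (k + 2) / (k * Real.log 2)) atTop (𝓝 D) := by
    have hlog : Tendsto (fun k : ℕ => Real.log (k + 2) / (k * Real.log 2)) atTop (𝓝 0) := by
      -- `k log 2 = log 2 · (k + 2) - 2 log 2`
      refine ((Real.tendsto_pow_log_div_mul_add_atTop (Real.log 2) (-2 * Real.log 2) 1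
        hlog2.ne').comp (tendsto_atTop_add_const_right _ 2 tendsto_natCast_atTop_atTop)).congr
        fun k => ?_
      simp only [Function.comp_apply, pow_one]
      ring_nf
    simpa using (tendsto_const_nhds.add
      (tendsto_const_div_atTop_nhds_zero_nat (Real.log C / Real.log 2))).add hlog
  refine tendsto_of_tendsto_of_tendsto_of_le_of_le' hlim_low hlim_up ?_ ?_
  · filter_upwards [hlow, eventually_gt_atTop 0] with k hk hk₀
    have hk₀' : (0 : ℝ) < k := by exact_mod_cast hk₀
    have := Real.log_le_log (Real.rpow_pos_of_pos two_pos _) hk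
    rw [Real.log_rpow two_pos] at this
    rw [le_div_iff₀ (by positivity)]
    calc (D - c / k) * (k * Real.log 2) = (k * D - c) * Real.log 2 := by field_simp
      _ ≤ Real.log (u k) := this
  · filter_upwards [hlow, hup, eventually_gt_atTop 0] with k hkl hku hk₀
    have hk₀' : (0 : ℝ) < k := by exact_mod_cast hk₀
    have hu : 0 < u k := (Real.rpow_pos_of_pos two_pos _).trans_le hkl
    have hC : 0 < C := by
      have : 0 < C * ((k + 2) * 2 ^ (k * D)) := by rw [← mul_assoc]; exact hu.trans_le hku
      exact (pos_iff_pos_of_mul_pos this).mpr (by positivity)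
    have := Real.log_le_log hu hku
    rw [Real.log_mul (by positivity) (by positivity), Real.log_mul (by positivity) (by positivity),
      Real.log_rpow two_pos] at this
    rw [div_le_iff₀ (by positivity)]
    calc Real.log (u k) ≤ Real.log C + Real.log (k + 2) + k * D * Real.log 2 := this
      _ = (D + Real.log C / Real.log 2 / k + Real.log (k + 2) / (k * Real.log 2)) *
          (k * Real.log 2) := by field_simp; ring

lemma frontier_box_coverableBy_of_side_le {n : ℕ} {a b : Fin (n + 1) → ℝ} (hab : a ≤ b)
    {m K : ℝ} (hside : ∀ i, b i - a i ≤ 2 ^ (-m)) (hmK : m + 1 ≤ K) :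
    CoverableBy (frontier (box a b)) (ENNReal.ofReal (√(n + 1) * 2 ^ (-K)))
      (4 * (n + 1) * 2 ^ ((K - m + 1) * n)) := by
  refine (frontier_box_coverableBy (Real.rpow_pos_of_pos two_pos _) hab
    fun i => div_two_rpow_neg_add_two_le (hside i) hmK).mono subset_rfl (by simp) (le_of_eq ?_)
  rw [Real.rpow_mul_natCast zero_le_two, Fintype.card_fin]
  push_cast
  ring_nf

lemma cube_coverableBy {n : ℕ} {M K : ℝ} (hMK : M + 1 ≤ K) :
    CoverableBy (box (0 : Fin (n + 1) → ℝ) fun _ => 2 ^ (-M))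
      (ENNReal.ofReal (√(n + 1) * 2 ^ (-K))) (2 ^ ((K - M + 1) * (n + 1))) := by
  refine (box_coverableBy (s := 2 ^ (-K)) (Real.rpow_pos_of_pos two_pos _)
    fun _ => (Real.rpow_pos_of_pos two_pos _).le).mono subset_rfl (by simp) ?_
  calc ∏ _i : Fin (n + 1), ((2 ^ (-M) - 0) / 2 ^ (-K) + 2)
      ≤ ∏ _i : Fin (n + 1), (2 : ℝ) ^ (K - M + 1) :=
        Finset.prod_le_prod (fun _ _ => by simp only [sub_zero]; positivity)
          fun _ _ => div_two_rpow_neg_add_two_le (by simp) hMK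
    _ = 2 ^ ((K - M + 1) * (n + 1)) := by
      rw [Finset.prod_const, Finset.card_univ, Fintype.card_fin,
        ← Real.rpow_mul_natCast zero_le_two]
      push_cast
      ring_nf

section FractalDomain

variable {n : ℕ} {α β : ℝ} {m j : ℕ}

lemma fractalSpacing_pos : 0 < fractalSpacing β m := Real.rpow_pos_of_pos two_pos _

lemma fractalSpacing_le (hβ : 0 ≤ β) : fractalSpacing β m ≤ 2 ^ (-(m : ℝ)) :=
  Real.rpow_le_rpow_of_exponent_le one_le_two (by
    have : (0 : ℝ) ≤ ⌊(m : ℝ) * β⌋ := by exact_mod_cast Int.floor_nonneg.mpr (by positivity)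
    linarith)

lemma fractalSpacing_antitone (hβ : 0 ≤ β) : Antitone (fractalSpacing β) := fun m' m h => by
  have hm : (m' : ℝ) ≤ m := by exact_mod_cast h
  have : (⌊(m' : ℝ) * β⌋ : ℝ) ≤ ⌊(m : ℝ) * β⌋ := by
    exact_mod_cast Int.floor_mono (mul_le_mul_of_nonneg_right hm hβ)
  exact Real.rpow_le_rpow_of_exponent_le one_le_two (by linarith)

lemma fractalSpacing_rpow_div_two_le (hα : 1 ≤ α) (hβ : 0 ≤ β) :
    fractalSpacing β m ^ α / 2 ≤ fractalSpacing β m / 2 := by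
  have h₁ : fractalSpacing β m ≤ 1 :=
    (fractalSpacing_le hβ).trans (Real.rpow_le_one_of_one_le_of_nonpos one_le_two (by simp))
  have := Real.rpow_le_rpow_of_exponent_ge fractalSpacing_pos h₁ hα
  rw [Real.rpow_one] at this
  linarith

lemma fractalSpacing_rpow_div_two_nonneg : 0 ≤ fractalSpacing β m ^ α / 2 :=
  div_nonneg (Real.rpow_nonneg fractalSpacing_pos.le α) zero_le_two

lemma natCast_toNat_floor_mul (hβ : 0 ≤ β) :
    ((⌊(m : ℝ) * β⌋.toNat : ℕ) : ℝ) = ⌊(m : ℝ) * β⌋ := by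
  exact_mod_cast Int.toNat_of_nonneg (Int.floor_nonneg.mpr (by positivity))

/-- The points `y_{mj}` of level `m` fill the interval `(2^{-m}, 2^{1-m}]` with step `a_m`. -/
lemma two_pow_floor_mul_fractalSpacing (hβ : 0 ≤ β) :
    (2 : ℝ) ^ ⌊(m : ℝ) * β⌋.toNat * fractalSpacing β m = 2 ^ (-(m : ℝ)) := by
  rw [fractalSpacing, ← Real.rpow_natCast, natCast_toNat_floor_mul hβ, ← Real.rpow_add two_pos]
  ring_nf

lemma fractalPoint_le (hβ : 0 ≤ β) (hj : j ≤ 2 ^ ⌊(m : ℝ) * β⌋.toNat) :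
    fractalPoint β m j ≤ 2 * 2 ^ (-(m : ℝ)) := by
  have : (j : ℝ) * fractalSpacing β m ≤ 2 ^ (-(m : ℝ)) := by
    rw [← two_pow_floor_mul_fractalSpacing hβ]
    exact mul_le_mul_of_nonneg_right (by exact_mod_cast hj) fractalSpacing_pos.le
  rw [fractalPoint]
  linarith

lemma fractalPoint_ge (hj : 1 ≤ j) :
    2 ^ (-(m : ℝ)) + fractalSpacing β m ≤ fractalPoint β m j := by
  have : fractalSpacing β m ≤ j * fractalSpacing β m :=
    le_mul_of_one_le_left fractalSpacing_pos.le (by exact_mod_cast hj)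
  rw [fractalPoint]
  linarith

lemma fractalPoint_sub_fractalPoint (j' : ℕ) :
    fractalPoint β m j' - fractalPoint β m j = ((j' : ℝ) - j) * fractalSpacing β m := by
  simp only [fractalPoint]
  ring

lemma fractalRect_eq_box :
    fractalRect n α β m j = box (Fin.cons (fractalPoint β m j - fractalSpacing β m ^ α / 2) 0)
      (Fin.cons (fractalPoint β m j) fun _ => 2 ^ (-(m : ℝ))) := by
  ext x
  simp [fractalRect, Fin.forall_fin_succ, Fin.succ_ne_zero]

lemma fractalBase_eq_box :
    fractalBase n = box (fun i : Fin (n + 1) => if (i : ℕ) < n then 0 else -1)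
      (fun i => if (i : ℕ) < n then 1 else 0) := by
  ext x
  simp [fractalBase, Fin.forall_fin_succ']

lemma fractalRect_subset_fractalDomain (hm : 1 ≤ m) (hj₁ : 1 ≤ j)
    (hj₂ : j ≤ 2 ^ ⌊(m : ℝ) * β⌋.toNat) : fractalRect n α β m j ⊆ fractalDomain n α β :=
  fun x hx => Or.inr (by simp only [mem_iUnion]; exact ⟨m, hm, j, hj₁, hj₂, hx⟩)

lemma apply_zero_mem_Icc_of_mem_fractalRect (hα : 1 ≤ α) (hβ : 0 ≤ β) (hj₁ : 1 ≤ j)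
    (hj₂ : j ≤ 2 ^ ⌊(m : ℝ) * β⌋.toNat) {x : EuclideanSpace ℝ (Fin (n + 1))}
    (hx : x ∈ fractalRect n α β m j) :
    x 0 ∈ Icc (2 ^ (-(m : ℝ)) + fractalSpacing β m / 2) (2 * 2 ^ (-(m : ℝ))) :=
  ⟨by linarith [hx.1.1, fractalPoint_ge (β := β) (m := m) hj₁,
      fractalSpacing_rpow_div_two_le (m := m) hα hβ],
    hx.1.2.trans (fractalPoint_le hβ hj₂)⟩

lemma fractalRect_subset_box (hα : 1 ≤ α) (hβ : 0 ≤ β) (hj₁ : 1 ≤ j)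
    (hj₂ : j ≤ 2 ^ ⌊(m : ℝ) * β⌋.toNat) :
    fractalRect n α β m j ⊆ box 0 fun _ => 2 * 2 ^ (-(m : ℝ)) := by
  intro x hx
  have hpos : (0 : ℝ) < 2 ^ (-(m : ℝ)) := Real.rpow_pos_of_pos two_pos _
  refine mem_box.mpr (Fin.cases ?_ fun i => ?_) <;> simp only [Pi.zero_apply]
  · have := apply_zero_mem_Icc_of_mem_fractalRect hα hβ hj₁ hj₂ hx
    exact ⟨by linarith [this.1, fractalSpacing_pos (β := β) (m := m)], this.2⟩
  · have := hx.2 i.succ (Fin.succ_ne_zero i)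
    exact ⟨this.1, by linarith [this.2]⟩

lemma fractalRect_subset_box_of_lt (hα : 1 ≤ α) (hβ : 0 ≤ β) (hj₁ : 1 ≤ j)
    (hj₂ : j ≤ 2 ^ ⌊(m : ℝ) * β⌋.toNat) {M : ℕ} (hMm : M < m) :
    fractalRect n α β m j ⊆ box 0 fun _ => 2 ^ (-(M : ℝ)) := fun _ hx =>
  mem_box.mpr fun i =>
    have := mem_box.mp (fractalRect_subset_box hα hβ hj₁ hj₂ hx) i
    ⟨this.1, this.2.trans (two_mul_two_rpow_neg_le hMm)⟩

/-- Only the finitely many rectangles of level at most `M` are kept: the others lie in the cube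
`[0, 2^{-M}]^{n+1}`. -/
lemma frontier_fractalDomain_subset (hα : 1 ≤ α) (hβ : 0 ≤ β) (M : ℕ) :
    frontier (fractalDomain n α β) ⊆ frontier (fractalBase n) ∪
      (⋃ m ∈ Finset.Icc 1 M, ⋃ j ∈ Finset.Icc 1 (2 ^ ⌊(m : ℝ) * β⌋.toNat),
        frontier (fractalRect n α β m j)) ∪ box 0 fun _ => 2 ^ (-(M : ℝ)) := by
  set A := fractalBase n ∪ (⋃ m ∈ Finset.Icc 1 M, ⋃ j ∈ Finset.Icc 1 (2 ^ ⌊(m : ℝ) * β⌋.toNat),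
    fractalRect n α β m j) ∪ box 0 fun _ => (2 : ℝ) ^ (-(M : ℝ))
  have hTA : fractalDomain n α β ⊆ A := by
    rintro x (hx | hx)
    · exact Or.inl (Or.inl hx)
    simp only [mem_iUnion] at hx
    obtain ⟨m, hm, j, hj₁, hj₂, hx⟩ := hx
    rcases le_or_gt m M with hmM | hMm
    · refine Or.inl (Or.inr ?_)
      simp only [mem_iUnion, Finset.mem_Icc]
      exact ⟨m, ⟨hm, hmM⟩, j, ⟨hj₁, hj₂⟩, hx⟩
    · exact Or.inr (fractalRect_subset_box_of_lt hα hβ hj₁ hj₂ hMm hx)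
  have hA : IsClosed A := by
    refine (IsClosed.union ?_ (isClosed_biUnion_finset fun m _ => isClosed_biUnion_finset
      fun j _ => ?_)).union isClosed_box
    · rw [fractalBase_eq_box]; exact isClosed_box
    · rw [fractalRect_eq_box]; exact isClosed_box
  intro x hx
  rcases closure_minimal hTA hA hx.1 with (hQ | hR) | hC
  · exact Or.inl (Or.inl (mem_frontier_of_mem_of_subset hx hQ subset_union_left))
  · simp only [mem_iUnion, Finset.mem_Icc] at hR
    obtain ⟨m, ⟨hm, hmM⟩, j, ⟨hj₁, hj₂⟩, hR⟩ := hR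
    refine Or.inl (Or.inr ?_)
    simp only [mem_iUnion, Finset.mem_Icc]
    exact ⟨m, ⟨hm, hmM⟩, j, ⟨hj₁, hj₂⟩,
      mem_frontier_of_mem_of_subset hx hR (fractalRect_subset_fractalDomain hm hj₁ hj₂)⟩
  · exact Or.inr hC

lemma frontier_fractalBase_coverableBy {K : ℝ} (hK : 1 ≤ K) :
    CoverableBy (frontier (fractalBase n)) (ENNReal.ofReal (√(n + 1) * 2 ^ (-K)))
      (4 * (n + 1) * 2 ^ ((K + 1) * n)) := by
  rw [fractalBase_eq_box]
  refine (frontier_box_coverableBy_of_side_le (m := 0) (fun i => ?_) (fun i => ?_)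
    (by linarith)).mono subset_rfl le_rfl (by simp)
  all_goals split_ifs <;> norm_num

lemma iUnion_frontier_fractalRect_coverableBy (hα : 1 ≤ α) (hβ : 0 ≤ β) {K : ℝ}
    (hmK : (m : ℝ) + 1 ≤ K) :
    CoverableBy (⋃ j ∈ Finset.Icc 1 (2 ^ ⌊(m : ℝ) * β⌋.toNat), frontier (fractalRect n α β m j))
      (ENNReal.ofReal (√(n + 1) * 2 ^ (-K)))
      (4 * (n + 1) * 2 ^ (⌊(m : ℝ) * β⌋ + (K - m + 1) * n)) := by
  have hrect : ∀ j ∈ Finset.Icc 1 (2 ^ ⌊(m : ℝ) * β⌋.toNat),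
      CoverableBy (frontier (fractalRect n α β m j)) (ENNReal.ofReal (√(n + 1) * 2 ^ (-K)))
        (4 * (n + 1) * 2 ^ ((K - m + 1) * n)) := fun j _ => by
    have hC := fractalSpacing_rpow_div_two_le (m := m) hα hβ
    have hC₀ := fractalSpacing_rpow_div_two_nonneg (α := α) (β := β) (m := m)
    have ha := fractalSpacing_le (m := m) hβ
    rw [fractalRect_eq_box]
    refine frontier_box_coverableBy_of_side_le (Fin.cases ?_ fun i => ?_)
      (Fin.cases ?_ fun i => ?_) hmK
    all_goals simp only [Fin.cons_zero, Fin.cons_succ, Pi.zero_apply]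
    all_goals linarith [Real.rpow_pos_of_pos two_pos (-(m : ℝ))]
  refine (CoverableBy.biUnion _ hrect).mono subset_rfl le_rfl (le_of_eq ?_)
  rw [Finset.sum_const, Nat.card_Icc, nsmul_eq_mul, Real.rpow_add two_pos,
    ← natCast_toNat_floor_mul hβ, Real.rpow_natCast]
  push_cast
  ring

lemma frontier_fractalDomain_coverableBy_of_le (hα : 1 ≤ α) (hβ : 0 ≤ β) {M : ℕ} {K : ℝ}
    (hMK : (M : ℝ) + 1 ≤ K) :
    CoverableBy (frontier (fractalDomain n α β)) (ENNReal.ofReal (√(n + 1) * 2 ^ (-K)))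
      (4 * ((n : ℝ) + 1) * 2 ^ ((K + 1) * n) +
        ∑ m ∈ Finset.Icc 1 M, 4 * ((n : ℝ) + 1) * 2 ^ (⌊(m : ℝ) * β⌋ + (K - m + 1) * n) +
        2 ^ ((K - M + 1) * (n + 1))) := by
  have hM : (0 : ℝ) ≤ M := Nat.cast_nonneg M
  have hbase := frontier_fractalBase_coverableBy (n := n) (K := K) (by linarith)
  have hlevels := CoverableBy.biUnion (Finset.Icc 1 M) fun m hm =>
    iUnion_frontier_fractalRect_coverableBy (n := n) (α := α) (K := K) hα hβ (by
      have : (m : ℝ) ≤ M := by exact_mod_cast (Finset.mem_Icc.mp hm).2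
      linarith)
  exact ((hbase.union hlevels).union (cube_coverableBy hMK)).mono
    (frontier_fractalDomain_subset hα hβ M) le_rfl le_rfl

lemma notMem_fractalDomain (hα : 1 ≤ α) (hβ : 0 ≤ β) (hj₁ : 1 ≤ j)
    (hj₂ : j ≤ 2 ^ ⌊(m : ℝ) * β⌋.toNat) {x : EuclideanSpace ℝ (Fin (n + 1))}
    (hx₀ : x 0 ∈ Ioo (fractalPoint β m j) (fractalPoint β m j + fractalSpacing β m / 2))
    (hxn : 0 < x (Fin.last n)) : x ∉ fractalDomain n α β := by
  rintro (hQ | hR)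
  · exact hxn.not_ge hQ.2.2
  simp only [mem_iUnion] at hR
  obtain ⟨m', -, j', hj'₁, hj'₂, hR⟩ := hR
  obtain ⟨hlo, hhi⟩ := apply_zero_mem_Icc_of_mem_fractalRect hα hβ hj'₁ hj'₂ hR
  have hy₁ := fractalPoint_ge (β := β) (m := m) hj₁
  have hy₂ := fractalPoint_le hβ hj₂
  have ha := fractalSpacing_pos (β := β) (m := m)
  rcases lt_trichotomy m' m with h | rfl | h
  · linarith [hx₀.2, two_mul_two_rpow_neg_le h, fractalSpacing_antitone hβ h.le]
  · have hdiff := fractalPoint_sub_fractalPoint (β := β) (m := m') (j := j) j'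
    rcases le_or_gt j' j with hj | hj
    · have : ((j' : ℝ) - j) * fractalSpacing β m' ≤ 0 :=
        mul_nonpos_of_nonpos_of_nonneg (by simpa using hj) ha.le
      linarith [hx₀.1, hR.1.2]
    · have : fractalSpacing β m' ≤ ((j' : ℝ) - j) * fractalSpacing β m' :=
        le_mul_of_one_le_left ha.le (by
          have : (j : ℝ) + 1 ≤ j' := by exact_mod_cast hj
          linarith)
      linarith [hx₀.2, hR.1.1, fractalSpacing_rpow_div_two_le (β := β) (m := m') hα hβ]
  · linarith [hx₀.1, two_mul_two_rpow_neg_le h]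

/-- Moving a point of the right face diagonally by `t • (1, …, 1)`, `0 < t < a_m / 2`, lands in
the gap. -/
lemma mem_frontier_of_mem_fractalRect (hα : 1 ≤ α) (hβ : 0 ≤ β) (hm : 1 ≤ m) (hj₁ : 1 ≤ j)
    (hj₂ : j ≤ 2 ^ ⌊(m : ℝ) * β⌋.toNat) {x : EuclideanSpace ℝ (Fin (n + 1))}
    (hx : x ∈ fractalRect n α β m j) (hx₀ : x 0 = fractalPoint β m j) :
    x ∈ frontier (fractalDomain n α β) := by
  rw [frontier_eq_closure_inter_closure]
  refine ⟨subset_closure (fractalRect_subset_fractalDomain hm hj₁ hj₂ hx), ?_⟩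
  set e : EuclideanSpace ℝ (Fin (n + 1)) := WithLp.toLp 2 fun _ => 1
  have hlim : Tendsto (fun t : ℝ => x + t • e) (𝓝[>] 0) (𝓝 x) := by
    refine Tendsto.mono_left ?_ nhdsWithin_le_nhds
    exact (continuous_const.add (continuous_id.smul continuous_const) :
      Continuous fun t : ℝ => x + t • e).tendsto' 0 x (by simp)
  refine mem_closure_of_tendsto hlim ?_
  filter_upwards [Ioo_mem_nhdsGT (half_pos (fractalSpacing_pos (β := β) (m := m)))] with t ht
  have hxn : 0 ≤ x (Fin.last n) := (mem_box.mp (fractalRect_subset_box hα hβ hj₁ hj₂ hx) _).1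
  refine notMem_fractalDomain hα hβ hj₁ hj₂ ?_ ?_
  · simp [e, hx₀, ht.1, ht.2]
  · simpa [e] using add_pos_of_nonneg_of_pos hxn ht.1

noncomputable def fractalGridPoint (β : ℝ) (m p j : ℕ) (v : Fin n → ℕ) :
    EuclideanSpace ℝ (Fin (n + 1)) :=
  WithLp.toLp 2 (Fin.cons (fractalPoint β m j) fun l => v l * 2 ^ (-((m : ℝ) + p)))

lemma fractalGridPoint_mem_fractalRect {p : ℕ} {v : Fin n → ℕ} (hv : ∀ l, v l < 2 ^ p) :
    fractalGridPoint β m p j v ∈ fractalRect n α β m j := by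
  rw [fractalRect_eq_box, mem_box]
  refine Fin.cases ?_ fun l => ?_
  · simp [fractalGridPoint, fractalSpacing_rpow_div_two_nonneg]
  · have hvl : (v l : ℝ) ≤ 2 ^ (p : ℝ) := by
      rw [Real.rpow_natCast]; exact_mod_cast (hv l).le
    have : (v l : ℝ) * 2 ^ (-((m : ℝ) + p)) ≤ 2 ^ (-(m : ℝ)) := by
      calc (v l : ℝ) * 2 ^ (-((m : ℝ) + p)) ≤ 2 ^ (p : ℝ) * 2 ^ (-((m : ℝ) + p)) := by gcongr
        _ = 2 ^ (-(m : ℝ)) := by rw [← Real.rpow_add two_pos]; ring_nf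
    simp only [fractalGridPoint, Fin.cons_succ, Pi.zero_apply, mem_Icc]
    exact ⟨by positivity, this⟩

/-- Points with different `j` are `a_m ≥ 2^{-(m+p)}` apart in the first coordinate. -/
lemma le_dist_fractalGridPoint (hβ : 0 ≤ β) {p : ℕ} (hp : ⌊(m : ℝ) * β⌋.toNat ≤ p) {j' : ℕ}
    {v v' : Fin n → ℕ} (hne : (j, v) ≠ (j', v')) :
    (2 : ℝ) ^ (-((m : ℝ) + p)) ≤
      dist (fractalGridPoint β m p j v) (fractalGridPoint β m p j' v') := by
  have hs : (0 : ℝ) ≤ 2 ^ (-((m : ℝ) + p)) := (Real.rpow_pos_of_pos two_pos _).le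
  by_cases hj : j = j'
  · subst hj
    obtain ⟨l, hl⟩ := Function.ne_iff.mp fun h : v = v' => hne (by rw [h])
    calc (2 : ℝ) ^ (-((m : ℝ) + p))
        ≤ dist ((v l : ℝ) * 2 ^ (-((m : ℝ) + p))) ((v' l : ℝ) * 2 ^ (-((m : ℝ) + p))) :=
          le_dist_natCast_mul hl hs
      _ = dist (fractalGridPoint β m p j v l.succ) (fractalGridPoint β m p j v' l.succ) := by
          simp [fractalGridPoint]
      _ ≤ _ := PiLp.dist_apply_le _ _ _
  · have hfloor : (⌊(m : ℝ) * β⌋ : ℝ) ≤ p := by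
      rw [← natCast_toNat_floor_mul hβ]; exact_mod_cast hp
    calc (2 : ℝ) ^ (-((m : ℝ) + p)) ≤ fractalSpacing β m :=
          Real.rpow_le_rpow_of_exponent_le one_le_two (by linarith)
      _ ≤ dist ((j : ℝ) * fractalSpacing β m) ((j' : ℝ) * fractalSpacing β m) :=
          le_dist_natCast_mul hj fractalSpacing_pos.le
      _ = dist (fractalGridPoint β m p j v 0) (fractalGridPoint β m p j' v' 0) := by
          simp [fractalGridPoint, fractalPoint]
      _ ≤ _ := PiLp.dist_apply_le _ _ _

end FractalDomain

lemma frontier_fractalDomain_coverableBy {n : ℕ} {α β : ℝ} (hα : 1 ≤ α) (hβ : (n : ℝ) ≤ β)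
    (k : ℕ) :
    CoverableBy (frontier (fractalDomain n α β)) (ENNReal.ofReal (2 ^ (-(k : ℝ))))
      (4 * (n + 1) * 2 ^ (β + (n + 2) * (n + 1)) * (k + 2) *
        2 ^ (k * ((n + 1) * β / (β + 1)))) := by
  have hβ₀ : 0 ≤ β := (Nat.cast_nonneg n).trans hβ
  set q := (k : ℝ) / (β + 1)
  set M := ⌈q⌉₊
  set E := k * ((n + 1) * β / (β + 1)) + (β + (n + 2) * (n + 1))
  have hq₀ : 0 ≤ q := by positivity
  have hkD : (k : ℝ) * ((n + 1) * β / (β + 1)) = k * n + q * (β - n) := by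
    simp only [q]; field_simp; ring
  have hkD' : (k : ℝ) * ((n + 1) * β / (β + 1)) = (n + 1) * (k - q) := by
    simp only [q]; field_simp; ring
  have hM₁ : q ≤ M := Nat.le_ceil _
  have hM₂ : (M : ℝ) < q + 1 := Nat.ceil_lt_add_one hq₀
  have hMk : (M : ℝ) ≤ k := by
    exact_mod_cast Nat.ceil_le.mpr (div_le_self (Nat.cast_nonneg k) (by linarith))
  have hE : (0 : ℝ) < 2 ^ E := Real.rpow_pos_of_pos two_pos _
  set K : ℝ := k + n + 1
  have hbase : 4 * ((n : ℝ) + 1) * 2 ^ ((K + 1) * n) ≤ 4 * (n + 1) * 2 ^ E := by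
    gcongr
    · exact one_le_two
    · nlinarith [mul_nonneg hq₀ (sub_nonneg.mpr hβ)]
  have hlevels : ∑ m ∈ Finset.Icc 1 M, 4 * ((n : ℝ) + 1) * 2 ^ (⌊(m : ℝ) * β⌋ + (K - m + 1) * n)
      ≤ M * (4 * (n + 1) * 2 ^ E) := by
    refine (Finset.sum_le_sum fun m hm => ?_).trans_eq
      (by rw [Finset.sum_const, Nat.card_Icc, nsmul_eq_mul, Nat.add_sub_cancel])
    have hmM : (m : ℝ) ≤ M := by exact_mod_cast (Finset.mem_Icc.mp hm).2
    gcongr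
    · exact one_le_two
    · nlinarith [Int.floor_le ((m : ℝ) * β), mul_nonneg (sub_nonneg.mpr hmM) (sub_nonneg.mpr hβ),
        mul_nonneg (sub_nonneg.mpr hM₂.le) (sub_nonneg.mpr hβ)]
  have hcube : (2 : ℝ) ^ ((K - M + 1) * (n + 1)) ≤ 2 ^ E :=
    Real.rpow_le_rpow_of_exponent_le one_le_two (by nlinarith)
  have htotal : 4 * ((n : ℝ) + 1) * 2 ^ E + M * (4 * (n + 1) * 2 ^ E) + 2 ^ E ≤
      4 * (n + 1) * (k + 2) * 2 ^ E := by
    nlinarith [mul_le_mul_of_nonneg_right hMk (by positivity : (0 : ℝ) ≤ 4 * (n + 1) * 2 ^ E)]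
  have hsplit : 4 * ((n : ℝ) + 1) * (k + 2) * 2 ^ E = 4 * (n + 1) * 2 ^ (β + (n + 2) * (n + 1)) *
      (k + 2) * 2 ^ (k * ((n + 1) * β / (β + 1))) := by
    rw [Real.rpow_add two_pos]; ring
  refine (frontier_fractalDomain_coverableBy_of_le (K := K) hα hβ₀ (M := M)
    (by linarith)).mono subset_rfl (ENNReal.ofReal_le_ofReal (sqrt_mul_two_rpow_neg_le n k)) ?_
  linarith

lemma two_pow_mul_pow_le_dyadicCoveringNumber {n m p : ℕ} {α β : ℝ} (hα : 1 ≤ α)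
    (hβ : (n : ℝ) ≤ β) (hm : 1 ≤ m) (hp : ⌊(m : ℝ) * β⌋.toNat ≤ p) :
    2 ^ ⌊(m : ℝ) * β⌋.toNat * (2 ^ p) ^ n ≤
      dyadicCoveringNumber (frontier (fractalDomain n α β)) (m + p + 1) := by
  have hβ₀ : 0 ≤ β := (Nat.cast_nonneg n).trans hβ
  let point (jv : Fin (2 ^ ⌊(m : ℝ) * β⌋.toNat) × (Fin n → Fin (2 ^ p))) :
      EuclideanSpace ℝ (Fin (n + 1)) :=
    fractalGridPoint β m p (jv.1 + 1) fun l => jv.2 l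
  have hfront (jv) : point jv ∈ frontier (fractalDomain n α β) :=
    mem_frontier_of_mem_fractalRect hα hβ₀ hm (Nat.le_add_left 1 _) jv.1.2
      (fractalGridPoint_mem_fractalRect fun l => (jv.2 l).2) (by simp [point, fractalGridPoint])
  have hsep : Pairwise fun jv jv' =>
      (2 : ℝ) ^ (-((m + p + 1 : ℕ) : ℝ)) < dist (point jv) (point jv') := by
    rintro ⟨j, v⟩ ⟨j', v'⟩ hne
    refine (Real.rpow_lt_rpow_of_exponent_lt one_lt_two (z := -((m : ℝ) + p))
      (by push_cast; linarith)).trans_le (le_dist_fractalGridPoint hβ₀ hp ?_)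
    simpa [funext_iff, Fin.val_inj] using hne
  simpa using card_le_dyadicCoveringNumber (frontier_fractalDomain_coverableBy hα hβ _)
    point hfront hsep

lemma two_rpow_le_dyadicCoveringNumber {n : ℕ} {α β : ℝ} (hα : 1 ≤ α) (hβ : (n : ℝ) ≤ β)
    {k : ℕ} (hk : β + 2 ≤ k) :
    (2 : ℝ) ^ (k * ((n + 1) * β / (β + 1)) - (β + 3)) ≤
      dyadicCoveringNumber (frontier (fractalDomain n α β)) k := by
  have hβ₀ : 0 ≤ β := (Nat.cast_nonneg n).trans hβ
  set q := ((k : ℝ) - 1) / (β + 1)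
  set m := ⌊q⌋₊
  have hq₁ : 1 ≤ q := by rw [one_le_div (by linarith)]; linarith
  have hm : 1 ≤ m := Nat.le_floor (by exact_mod_cast hq₁)
  have hmq : (m : ℝ) ≤ q := Nat.floor_le (by linarith)
  have hqm : q - 1 < m := Nat.sub_one_lt_floor q
  have hmβ : (m : ℝ) * (β + 1) ≤ k - 1 := by
    simpa [q, le_div_iff₀ (by linarith : 0 < β + 1)] using hmq
  have hfloor := natCast_toNat_floor_mul (m := m) hβ₀
  have hmk : m + ⌊(m : ℝ) * β⌋.toNat + 1 ≤ k := by
    have : (m : ℝ) + ⌊(m : ℝ) * β⌋.toNat + 1 ≤ k := by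
      rw [hfloor]; linarith [Int.floor_le ((m : ℝ) * β)]
    exact_mod_cast this
  set p := k - 1 - m
  have hp : ⌊(m : ℝ) * β⌋.toNat ≤ p := by omega
  have hpR : (p : ℝ) = k - 1 - m := by
    rw [show p = k - (m + 1) by omega, Nat.cast_sub (by omega)]; push_cast; ring
  have hcount := two_pow_mul_pow_le_dyadicCoveringNumber hα hβ hm hp
  rw [show m + p + 1 = k by omega] at hcount
  refine le_trans ?_ (Nat.cast_le.mpr hcount)
  push_cast
  rw [← pow_mul, ← pow_add, ← Real.rpow_natCast]
  refine Real.rpow_le_rpow_of_exponent_le one_le_two ?_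
  push_cast
  rw [hfloor, hpR]
  have hkD : (k : ℝ) * ((n + 1) * β / (β + 1)) = k * n + (q + 1 / (β + 1)) * (β - n) := by
    simp only [q]; field_simp; ring
  have hsmall : 1 / (β + 1) * (β - n) ≤ 1 := by
    rw [div_mul_eq_mul_div, one_mul, div_le_one (by linarith)]; linarith
  nlinarith [Int.sub_one_lt_floor ((m : ℝ) * β),
    mul_nonneg (sub_nonneg.mpr (le_of_lt hqm)) (sub_nonneg.mpr hβ)]

theorem fractal_boundary_minkowski_dimension_general
    (n : ℕ) (α β : ℝ) (hα : 1 ≤ α) (hβ : (n : ℝ) ≤ β) :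
    Filter.limsup
      (fun k : ℕ =>
        Real.log (dyadicCoveringNumber (frontier (fractalDomain n α β)) k) /
          ((k : ℝ) * Real.log 2))
      Filter.atTop = ((n : ℝ) + 1) * β / (β + 1) := by
  refine (tendsto_log_div_of_two_rpow_bounds (c := β + 3) ?_ (Eventually.of_forall fun k =>
    dyadicCoveringNumber_le (frontier_fractalDomain_coverableBy hα hβ k))).limsup_eq
  filter_upwards [eventually_ge_atTop ⌈β + 2⌉₊] with k hk
  exact two_rpow_le_dyadicCoveringNumber hα hβ (Nat.ceil_le.mp hk)

/-- the upper Minkowski dimension of `S_{α,β} = ∂T_{α,β}`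
equals `(n+1)β/(β+1)`, computed as
`limsup_{k→∞} log N_k(S_{α,β})/(k log 2)`. -/
theorem fractal_boundary_minkowski_dimension
    (n : ℕ) (hn : 1 ≤ n) (α β : ℝ) (hα : 1 ≤ α) (hβ : (n : ℝ) ≤ β) :
    Filter.limsup
      (fun k : ℕ =>
        Real.log (dyadicCoveringNumber (frontier (fractalDomain n α β)) k) /
          ((k : ℝ) * Real.log 2))
      Filter.atTop = ((n : ℝ) + 1) * β / (β + 1) :=
  fractal_boundary_minkowski_dimension_general n α β hα hβ
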